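/- Let P ⊆ ℝ^d be a full-dimensional polytope and f a continuous function on P extended by zero outside P. Then for every x ∈ ℝ^d, lim_{ε→0⁺} (f ∗ φ_{d,ε})(x) = f(x)·ω_P(x), where ω_P(x) is the solid angle of P at x and φ_{d,ε}(x) = ε^{-d/2} e^{-π‖x‖²/ε}. -/

import Mathlib

open scoped BigOperators
open MeasureTheory
open scoped ENNReal
attribute [local instance] Classical.propDecidable

/-- The Euclidean ball of radius `ε` around `c` in `ℝ^d`. -/
def eball {d : ℕ} (c : Fin d → ℝ) (ε : ℝ) : Set (Fin d → ℝ) :=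
  {y | ∑ i, (y i - c i) ^ 2 < ε ^ 2}

/-- `saTendsto Q c ω` says that the solid angle of `Q` at `c` exists and equals `ω`:
the proportion of a small Euclidean ball around `c` occupied by `Q` tends to `ω`. -/
def saTendsto {d : ℕ} (Q : Set (Fin d → ℝ)) (c : Fin d → ℝ) (ω : ℝ) : Prop :=
  Filter.Tendsto
    (fun ε : ℝ => (volume (eball c ε ∩ Q)).toReal / (volume (eball c ε)).toReal)
    (nhdsWithin 0 (Set.Ioi 0)) (nhds ω)

/-- The heat Gaussian `φ_{d,ε}(x) = ε^{-d/2} e^{-π‖x‖²/ε}`. -/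
noncomputable def gaussKer (d : ℕ) (ε : ℝ) (x : Fin d → ℝ) : ℝ :=
  ε ^ (-(d : ℝ) / 2) * Real.exp (-Real.pi * (∑ i, (x i) ^ 2) / ε)

lemma isOpen_eball {d : ℕ} (c : Fin d → ℝ) (ε : ℝ) : IsOpen (eball c ε) := by
  have : Continuous fun y : Fin d → ℝ => ∑ i, (y i - c i) ^ 2 := by
    continuity
  exact isOpen_lt this continuous_const

lemma meas_eball {d : ℕ} (c : Fin d → ℝ) (ε : ℝ) : MeasurableSet (eball c ε) :=
  (isOpen_eball c ε).measurableSet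

lemma eball_zero {d : ℕ} (c : Fin d → ℝ) : eball c 0 = ∅ := by
  ext y
  simp only [eball, Set.mem_setOf_eq, Set.mem_empty_iff_false, iff_false, not_lt]
  have : (0:ℝ) ≤ ∑ i, (y i - c i) ^ 2 := by positivity
  simpa using this

lemma eball_subset_pi {d : ℕ} (c : Fin d → ℝ) {r : ℝ} (hr : 0 ≤ r) :
    eball c r ⊆ Metric.closedBall c r := by
  intro y hy
  rw [mem_closedBall_iff_norm]
  rw [pi_norm_le_iff_of_nonneg hr]
  intro i
  have h1 : (y i - c i) ^ 2 ≤ ∑ j, (y j - c j) ^ 2 :=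
    Finset.single_le_sum (f := fun j => (y j - c j) ^ 2) (fun j _ => by positivity)
      (Finset.mem_univ i)
  have h2 : (y i - c i) ^ 2 ≤ r ^ 2 := h1.trans hy.le
  have h3 := Real.sqrt_le_sqrt h2
  rw [Real.sqrt_sq_eq_abs, Real.sqrt_sq hr] at h3
  simpa using h3

lemma volume_eball_lt_top {d : ℕ} (c : Fin d → ℝ) (r : ℝ) : volume (eball c r) < ⊤ := by
  rcases le_or_gt 0 r with hr | hr
  · exact lt_of_le_of_lt (measure_mono (eball_subset_pi c hr))
      (measure_closedBall_lt_top)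
  · have he : eball c r = eball c (-r) := by
      simp [eball, neg_sq]
    rw [he]
    exact lt_of_le_of_lt (measure_mono (eball_subset_pi c (by linarith)))
      measure_closedBall_lt_top

lemma volume_eball_pos {d : ℕ} (c : Fin d → ℝ) {r : ℝ} (hr : 0 < r) :
    0 < volume (eball c r) := by
  have : c ∈ eball c r := by
    simp [eball, hr, pow_pos hr]
  exact (isOpen_eball c r).measure_pos volume ⟨c, this⟩

lemma gaussKer_nonneg {d : ℕ} {ε : ℝ} (hε : 0 < ε) (z : Fin d → ℝ) :
    0 ≤ gaussKer d ε z := by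
  unfold gaussKer
  positivity

lemma continuous_gaussKer {d : ℕ} (ε : ℝ) : Continuous (gaussKer d ε) := by
  unfold gaussKer
  fun_prop

lemma gaussKer_eq_prod {d : ℕ} (ε : ℝ) :
    gaussKer d ε = fun z =>
      ε ^ (-(d : ℝ) / 2) * ∏ i, Real.exp (-(Real.pi / ε) * (z i) ^ 2) := by
  funext z
  rw [gaussKer, ← Real.exp_sum]
  congr 2
  have h : ∀ i : Fin d, -(Real.pi / ε) * (z i) ^ 2 = -Real.pi * (z i) ^ 2 / ε := by
    intro i; ring
  simp_rw [h, ← Finset.sum_div, ← Finset.mul_sum]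

lemma integrable_gaussKer {d : ℕ} {ε : ℝ} (hε : 0 < ε) : Integrable (gaussKer d ε) := by
  rw [gaussKer_eq_prod]
  exact (Integrable.fintype_prod (𝕜 := ℝ)
    (fun i => integrable_exp_neg_mul_sq (div_pos Real.pi_pos hε))).const_mul _

lemma integral_gaussKer {d : ℕ} {ε : ℝ} (hε : 0 < ε) :
    ∫ z : Fin d → ℝ, gaussKer d ε z = 1 := by
  rw [gaussKer_eq_prod, integral_const_mul, integral_fintype_prod_volume_eq_pow (𝕜 := ℝ) (ι := Fin d)
    (fun t : ℝ => Real.exp (-(Real.pi / ε) * t ^ 2)), integral_gaussian]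
  have hππ : Real.pi / (Real.pi / ε) = ε := by
    rw [div_div_eq_mul_div, mul_comm, mul_div_assoc, div_self Real.pi_ne_zero, mul_one]
  rw [hππ, Fintype.card_fin]
  have hsq : Real.sqrt ε ^ (d : ℕ) = ε ^ ((d : ℝ) / 2) := by
    rw [Real.sqrt_eq_rpow, ← Real.rpow_natCast (ε ^ ((1:ℝ)/2)) d, ← Real.rpow_mul hε.le]
    norm_num
    ring_nf
  have h0 : -(d : ℝ) / 2 + (d : ℝ) / 2 = 0 := by ring
  rw [hsq, ← Real.rpow_add hε, h0, Real.rpow_zero]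

noncomputable def gaussRad (d : ℕ) (ε t : ℝ) : ℝ :=
  Real.sqrt (ε * Real.log (ε ^ (-(d : ℝ) / 2) / t) / Real.pi)

lemma superlevel_eq {d : ℕ} {ε t : ℝ} (hε : 0 < ε) (ht : 0 < t) (x : Fin d → ℝ) :
    {y : Fin d → ℝ | t < gaussKer d ε (x - y)} = eball x (gaussRad d ε t) := by
  set A : ℝ := ε ^ (-(d : ℝ) / 2) with hA
  have hA0 : 0 < A := Real.rpow_pos_of_pos hε _
  ext y
  simp only [Set.mem_setOf_eq, eball, gaussKer]
  have hq : ∀ i, (x - y) i ^ 2 = (y i - x i) ^ 2 := by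
    intro i; simp [Pi.sub_apply]; ring
  simp_rw [hq]
  set q : ℝ := ∑ i, (y i - x i) ^ 2 with hqdef
  have hq0 : 0 ≤ q := by positivity
  set ρ : ℝ := ε * Real.log (A / t) / Real.pi with hρ
  have key : t < A * Real.exp (-Real.pi * q / ε) ↔ q < ρ := by
    rw [← div_lt_iff₀' hA0, ← Real.log_lt_iff_lt_exp (div_pos ht hA0)]
    have hlog : Real.log (t / A) = -Real.log (A / t) := by
      rw [← Real.log_inv, inv_div]
    rw [hlog, show -Real.pi * q / ε = -(Real.pi * q / ε) by ring, neg_lt_neg_iff,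
      div_lt_iff₀ hε, hρ, lt_div_iff₀ Real.pi_pos]
    constructor <;> intro hh <;>
      linarith [mul_comm Real.pi q, mul_comm (Real.log (A / t)) ε]
  rw [key]
  unfold gaussRad
  rw [← hA, ← hρ]
  rcases le_or_gt ρ 0 with h | h
  · have h0 : Real.sqrt ρ = 0 := Real.sqrt_eq_zero'.mpr h
    have h00 : (0 : ℝ) ^ 2 = 0 := by norm_num
    rw [h0, h00]
    exact ⟨fun hlt => by linarith, fun hlt => by linarith⟩
  · rw [Real.sq_sqrt h.le]

lemma eball_mono {d : ℕ} (c : Fin d → ℝ) {r₁ r₂ : ℝ} (h0 : 0 ≤ r₁) (h : r₁ ≤ r₂) :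
    eball c r₁ ⊆ eball c r₂ := fun y hy =>
  lt_of_lt_of_le hy (pow_le_pow_left₀ h0 h 2)

lemma gaussRad_nonneg {d : ℕ} (ε t : ℝ) : 0 ≤ gaussRad d ε t := Real.sqrt_nonneg _

lemma gaussRad_antitoneOn {d : ℕ} {ε : ℝ} (hε : 0 < ε) :
    AntitoneOn (gaussRad d ε) (Set.Ioi (0 : ℝ)) := by
  intro s hs t ht hst
  unfold gaussRad
  apply Real.sqrt_le_sqrt
  have hA0 : (0 : ℝ) < ε ^ (-(d : ℝ) / 2) := Real.rpow_pos_of_pos hε _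
  have h1 : ε ^ (-(d : ℝ) / 2) / t ≤ ε ^ (-(d : ℝ) / 2) / s :=
    div_le_div_of_nonneg_left hA0.le hs hst
  have h2 : Real.log (ε ^ (-(d : ℝ) / 2) / t) ≤ Real.log (ε ^ (-(d : ℝ) / 2) / s) :=
    Real.log_le_log (div_pos hA0 ht) h1
  have h3 := mul_le_mul_of_nonneg_left h2 hε.le
  exact (div_le_div_iff_of_pos_right Real.pi_pos).mpr h3

lemma meas_layer {d : ℕ} {ε : ℝ} (hε : 0 < ε) (x : Fin d → ℝ) (S : Set (Fin d → ℝ)) :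
    AEMeasurable (fun t => volume (S ∩ eball x (gaussRad d ε t)))
      (volume.restrict (Set.Ioi (0 : ℝ))) := by
  apply aemeasurable_restrict_of_antitoneOn measurableSet_Ioi
  intro s hs t ht hst
  exact measure_mono (Set.inter_subset_inter_right _
    (eball_mono x (gaussRad_nonneg _ _) (gaussRad_antitoneOn hε hs ht hst)))

lemma layercake_gauss {d : ℕ} {ε : ℝ} (hε : 0 < ε) (x : Fin d → ℝ) {S : Set (Fin d → ℝ)}
    (hS : MeasurableSet S) :
    ∫⁻ y in S, ENNReal.ofReal (gaussKer d ε (x - y))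
      = ∫⁻ t in Set.Ioi (0 : ℝ), volume (S ∩ eball x (gaussRad d ε t)) := by
  have hc : Continuous fun y : Fin d → ℝ => gaussKer d ε (x - y) := by
    have h := continuous_gaussKer (d := d) ε
    fun_prop
  rw [lintegral_eq_lintegral_meas_lt (f := fun y => gaussKer d ε (x - y)) (volume.restrict S)
    (Filter.Eventually.of_forall fun y => gaussKer_nonneg hε _) hc.aemeasurable]
  refine setLIntegral_congr_fun measurableSet_Ioi
    (fun t ht => ?_)
  rw [superlevel_eq hε ht x, Measure.restrict_apply (meas_eball _ _), Set.inter_comm]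

lemma integrable_gaussKer_sub {d : ℕ} {ε : ℝ} (hε : 0 < ε) (x : Fin d → ℝ) :
    Integrable (fun y : Fin d → ℝ => gaussKer d ε (x - y)) :=
  (integrable_gaussKer hε).comp_sub_left x

lemma lintegral_gaussKer_one {d : ℕ} {ε : ℝ} (hε : 0 < ε) (x : Fin d → ℝ) :
    ∫⁻ y : Fin d → ℝ, ENNReal.ofReal (gaussKer d ε (x - y)) = 1 := by
  rw [← ofReal_integral_eq_lintegral_ofReal (integrable_gaussKer_sub hε x)
    (Filter.Eventually.of_forall fun y => gaussKer_nonneg hε _)]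
  rw [integral_sub_left_eq_self (gaussKer d ε) volume x, integral_gaussKer hε,
    ENNReal.ofReal_one]

lemma layercake_total {d : ℕ} {ε : ℝ} (hε : 0 < ε) (x : Fin d → ℝ) :
    ∫⁻ t in Set.Ioi (0 : ℝ), volume (eball x (gaussRad d ε t)) = 1 := by
  have h := layercake_gauss hε x MeasurableSet.univ
  rw [Measure.restrict_univ, lintegral_gaussKer_one hε x] at h
  simp only [Set.univ_inter] at h
  exact h.symm

lemma gaussKer_tail_bound {d : ℕ} {ε δ : ℝ} (hε : 0 < ε) {z : Fin d → ℝ}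
    (hz : δ ^ 2 ≤ ∑ i, (z i) ^ 2) :
    gaussKer d ε z ≤ (2 : ℝ) ^ ((d : ℝ) / 2) * Real.exp (-Real.pi * δ ^ 2 / (2 * ε))
      * gaussKer d (2 * ε) z := by
  unfold gaussKer
  set q : ℝ := ∑ i, (z i) ^ 2 with hqdef
  have hq : (0 : ℝ) ≤ q := by positivity
  have e1 : Real.exp (-Real.pi * q / ε)
      = Real.exp (-Real.pi * q / (2 * ε)) * Real.exp (-Real.pi * q / (2 * ε)) := by
    rw [← Real.exp_add]
    congr 1
    field_simp
    ring
  have e2 : Real.exp (-Real.pi * q / (2 * ε)) ≤ Real.exp (-Real.pi * δ ^ 2 / (2 * ε)) := by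
    apply Real.exp_le_exp.mpr
    apply div_le_div_of_nonneg_right ?_ (by positivity : (0:ℝ) ≤ 2 * ε)
    nlinarith [Real.pi_pos]
  have e3 : (ε : ℝ) ^ (-(d : ℝ) / 2)
      = (2 : ℝ) ^ ((d : ℝ) / 2) * (2 * ε) ^ (-(d : ℝ) / 2) := by
    rw [Real.mul_rpow (by norm_num) hε.le, ← mul_assoc, ← Real.rpow_add two_pos]
    have h0 : (d : ℝ) / 2 + -(d : ℝ) / 2 = 0 := by ring
    rw [h0, Real.rpow_zero, one_mul]
  rw [e3, e1]
  have hpos1 : (0:ℝ) < (2 * ε) ^ (-(d : ℝ) / 2) := Real.rpow_pos_of_pos (by linarith) _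
  have hpos2 : (0:ℝ) < (2:ℝ) ^ ((d : ℝ) / 2) := Real.rpow_pos_of_pos two_pos _
  calc (2 : ℝ) ^ ((d : ℝ) / 2) * (2 * ε) ^ (-(d : ℝ) / 2)
        * (Real.exp (-Real.pi * q / (2 * ε)) * Real.exp (-Real.pi * q / (2 * ε)))
      ≤ (2 : ℝ) ^ ((d : ℝ) / 2) * (2 * ε) ^ (-(d : ℝ) / 2)
        * (Real.exp (-Real.pi * δ ^ 2 / (2 * ε)) * Real.exp (-Real.pi * q / (2 * ε))) := by
        apply mul_le_mul_of_nonneg_left (mul_le_mul_of_nonneg_right e2 (Real.exp_nonneg _))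
        positivity
    _ = (2 : ℝ) ^ ((d : ℝ) / 2) * Real.exp (-Real.pi * δ ^ 2 / (2 * ε))
        * ((2 * ε) ^ (-(d : ℝ) / 2) * Real.exp (-Real.pi * q / (2 * ε))) := by ring

lemma tail_tendsto {d : ℕ} (x : Fin d → ℝ) {δ : ℝ} (hδ : 0 < δ) :
    Filter.Tendsto
      (fun ε => ∫⁻ y in (eball x δ)ᶜ, ENNReal.ofReal (gaussKer d ε (x - y)))
      (nhdsWithin 0 (Set.Ioi 0)) (nhds 0) := by
  have hbound : ∀ ε ∈ Set.Ioi (0:ℝ),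
      (∫⁻ y in (eball x δ)ᶜ, ENNReal.ofReal (gaussKer d ε (x - y)))
        ≤ ENNReal.ofReal ((2 : ℝ) ^ ((d : ℝ) / 2)
            * Real.exp (-Real.pi * δ ^ 2 / (2 * ε))) := by
    intro ε hε
    rw [Set.mem_Ioi] at hε
    set k : ℝ := (2 : ℝ) ^ ((d : ℝ) / 2) * Real.exp (-Real.pi * δ ^ 2 / (2 * ε)) with hk
    have hk0 : 0 ≤ k := by positivity
    calc ∫⁻ y in (eball x δ)ᶜ, ENNReal.ofReal (gaussKer d ε (x - y))
        ≤ ∫⁻ y in (eball x δ)ᶜ, ENNReal.ofReal (k * gaussKer d (2 * ε) (x - y)) := by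
          apply lintegral_mono_ae
          rw [ae_restrict_iff' (meas_eball x δ).compl]
          refine Filter.Eventually.of_forall fun y hy => ?_
          apply ENNReal.ofReal_le_ofReal
          have hyq : δ ^ 2 ≤ ∑ i, ((x - y) i) ^ 2 := by
            simp only [eball, Set.mem_compl_iff, Set.mem_setOf_eq, not_lt] at hy
            calc δ ^ 2 ≤ ∑ i, (y i - x i) ^ 2 := hy
              _ = ∑ i, ((x - y) i) ^ 2 := by
                  apply Finset.sum_congr rfl
                  intro i _
                  have : (x - y) i = x i - y i := rfl
                  rw [this]
                  ring
          exact gaussKer_tail_bound hε hyq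
      _ ≤ ∫⁻ y, ENNReal.ofReal (k * gaussKer d (2 * ε) (x - y)) :=
          setLIntegral_le_lintegral _ _
      _ = ENNReal.ofReal k * ∫⁻ y, ENNReal.ofReal (gaussKer d (2 * ε) (x - y)) := by
          simp_rw [ENNReal.ofReal_mul hk0]
          exact lintegral_const_mul' _ _ ENNReal.ofReal_ne_top
      _ = ENNReal.ofReal k := by
          rw [lintegral_gaussKer_one (by linarith : (0:ℝ) < 2 * ε) x, mul_one]
  have hlim : Filter.Tendsto
      (fun ε : ℝ => ENNReal.ofReal ((2 : ℝ) ^ ((d : ℝ) / 2)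
        * Real.exp (-Real.pi * δ ^ 2 / (2 * ε))))
      (nhdsWithin 0 (Set.Ioi 0)) (nhds 0) := by
    have h1 : Filter.Tendsto (fun ε : ℝ => -Real.pi * δ ^ 2 / (2 * ε))
        (nhdsWithin 0 (Set.Ioi 0)) Filter.atBot := by
      have h2 : Filter.Tendsto (fun ε : ℝ => (Real.pi * δ ^ 2 / 2) * ε⁻¹)
          (nhdsWithin 0 (Set.Ioi 0)) Filter.atTop :=
        Filter.Tendsto.const_mul_atTop (by positivity) tendsto_inv_nhdsGT_zero
      have h3 : Filter.Tendsto (fun ε : ℝ => -((Real.pi * δ ^ 2 / 2) * ε⁻¹))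
          (nhdsWithin 0 (Set.Ioi 0)) Filter.atBot := Filter.tendsto_neg_atBot_iff.mpr h2
      refine h3.congr fun ε => by field_simp
    have h4 : Filter.Tendsto
        (fun ε : ℝ => (2 : ℝ) ^ ((d : ℝ) / 2) * Real.exp (-Real.pi * δ ^ 2 / (2 * ε)))
        (nhdsWithin 0 (Set.Ioi 0)) (nhds ((2 : ℝ) ^ ((d : ℝ) / 2) * 0)) :=
      (Real.tendsto_exp_atBot.comp h1).const_mul _
    rw [mul_zero] at h4
    have := ENNReal.tendsto_ofReal (a := 0) h4
    rwa [ENNReal.ofReal_zero] at this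
  apply tendsto_of_tendsto_of_tendsto_of_le_of_le' tendsto_const_nhds hlim
  · exact Filter.Eventually.of_forall fun ε => zero_le
  · exact Filter.eventually_iff_exists_mem.mpr ⟨Set.Ioi 0, self_mem_nhdsWithin, hbound⟩

lemma ratio_to_meas {d : ℕ} {P : Set (Fin d → ℝ)} {x : Fin d → ℝ} {r ω κ : ℝ}
    (hr : 0 < r) (hω0 : 0 ≤ ω) (hκ : 0 < κ)
    (h : |(volume (eball x r ∩ P)).toReal / (volume (eball x r)).toReal - ω| < κ) :
    volume (eball x r ∩ P) ≤ ENNReal.ofReal (ω + κ) * volume (eball x r)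
    ∧ ENNReal.ofReal (ω - κ) * volume (eball x r) ≤ volume (eball x r ∩ P) := by
  set b := volume (eball x r) with hb
  set a := volume (eball x r ∩ P) with ha
  have hb0 : 0 < b := volume_eball_pos x hr
  have hbt : b ≠ ⊤ := (volume_eball_lt_top x r).ne
  have hab : a ≤ b := measure_mono Set.inter_subset_left
  have hat : a ≠ ⊤ := (lt_of_le_of_lt hab (volume_eball_lt_top x r)).ne
  have hbR : 0 < b.toReal := ENNReal.toReal_pos hb0.ne' hbt
  rw [abs_lt] at h
  have hup : a.toReal ≤ (ω + κ) * b.toReal := by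
    have h2 : a.toReal / b.toReal < ω + κ := by linarith [h.2]
    rw [div_lt_iff₀ hbR] at h2
    linarith
  have hlo : (ω - κ) * b.toReal ≤ a.toReal := by
    have h2 : ω - κ < a.toReal / b.toReal := by linarith [h.1]
    rw [lt_div_iff₀ hbR] at h2
    linarith
  constructor
  · calc a = ENNReal.ofReal a.toReal := (ENNReal.ofReal_toReal hat).symm
      _ ≤ ENNReal.ofReal ((ω + κ) * b.toReal) := ENNReal.ofReal_le_ofReal hup
      _ = ENNReal.ofReal (ω + κ) * ENNReal.ofReal b.toReal :=
          ENNReal.ofReal_mul (by linarith)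
      _ = ENNReal.ofReal (ω + κ) * b := by rw [ENNReal.ofReal_toReal hbt]
  · rcases le_or_gt (ω - κ) 0 with hneg | hpos
    · rw [ENNReal.ofReal_of_nonpos hneg, zero_mul]
      exact zero_le
    · calc ENNReal.ofReal (ω - κ) * b
          = ENNReal.ofReal (ω - κ) * ENNReal.ofReal b.toReal := by
            rw [ENNReal.ofReal_toReal hbt]
        _ = ENNReal.ofReal ((ω - κ) * b.toReal) := (ENNReal.ofReal_mul hpos.le).symm
        _ ≤ ENNReal.ofReal a.toReal := ENNReal.ofReal_le_ofReal hlo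
        _ = a := ENNReal.ofReal_toReal hat

lemma key_bounds {d : ℕ} {P : Set (Fin d → ℝ)} (hPm : MeasurableSet P) {x : Fin d → ℝ}
    {ω κ δ δ₀ : ℝ} (hω0 : 0 ≤ ω) (hκ : 0 < κ) (hδ₀ : 0 < δ₀) (hδ₀δ : δ₀ < δ)
    (hδ : ∀ r : ℝ, 0 < r → r < δ →
      |(volume (eball x r ∩ P)).toReal / (volume (eball x r)).toReal - ω| < κ)
    {ε : ℝ} (hε : 0 < ε) :
    (∫⁻ y in P, ENNReal.ofReal (gaussKer d ε (x - y)))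
        ≤ ENNReal.ofReal (ω + κ)
          + (∫⁻ y in (eball x δ₀)ᶜ, ENNReal.ofReal (gaussKer d ε (x - y)))
    ∧ ENNReal.ofReal (ω - κ)
          * (1 - (∫⁻ y in (eball x δ₀)ᶜ, ENNReal.ofReal (gaussKer d ε (x - y))))
        ≤ ∫⁻ y in P, ENNReal.ofReal (gaussKer d ε (x - y)) := by
  set r : ℝ → ℝ := fun t => gaussRad d ε t with hr
  set m : ℝ → ℝ := fun t => min (r t) δ₀ with hm
  have hm0 : ∀ t, 0 ≤ m t := fun t => le_min (gaussRad_nonneg _ _) hδ₀.le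
  have hmr : ∀ t, m t ≤ r t := fun t => min_le_left _ _
  have hsub : ∀ t, eball x (m t) ⊆ eball x (r t) := fun t => eball_mono x (hm0 t) (hmr t)
  have hincl : ∀ (S : Set (Fin d → ℝ)) (t : ℝ),
      S ∩ eball x (r t) ⊆ (S ∩ eball x (m t)) ∪ ((eball x δ₀)ᶜ ∩ eball x (r t)) := by
    intro S t y hy
    by_cases hyC : y ∈ eball x δ₀
    · left
      refine ⟨hy.1, ?_⟩
      have h1 : ∑ i, (y i - x i) ^ 2 < (r t) ^ 2 := hy.2
      have h2 : ∑ i, (y i - x i) ^ 2 < δ₀ ^ 2 := hyC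
      rcases le_total (r t) δ₀ with h | h
      · show ∑ i, (y i - x i) ^ 2 < (m t) ^ 2
        rw [hm]
        simp only [min_eq_left h]
        exact h1
      · show ∑ i, (y i - x i) ^ 2 < (m t) ^ 2
        rw [hm]
        simp only [min_eq_right h]
        exact h2
    · right
      exact ⟨hyC, hy.2⟩
  have hmeasineq : ∀ (S : Set (Fin d → ℝ)) (t : ℝ),
      volume (S ∩ eball x (r t))
        ≤ volume (S ∩ eball x (m t)) + volume ((eball x δ₀)ᶜ ∩ eball x (r t)) :=
    fun S t => le_trans (measure_mono (hincl S t)) (measure_union_le _ _)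
  have hratio : ∀ t : ℝ,
      volume (eball x (m t) ∩ P) ≤ ENNReal.ofReal (ω + κ) * volume (eball x (m t))
      ∧ ENNReal.ofReal (ω - κ) * volume (eball x (m t)) ≤ volume (eball x (m t) ∩ P) := by
    intro t
    rcases eq_or_lt_of_le (hm0 t) with h0 | h0
    · rw [← h0, eball_zero]
      simp
    · exact ratio_to_meas h0 hω0 hκ
        (hδ _ h0 (lt_of_le_of_lt (min_le_right _ _) hδ₀δ))
  have hanti : ∀ s ∈ Set.Ioi (0:ℝ), ∀ t ∈ Set.Ioi (0:ℝ), s ≤ t →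
      eball x (m t) ⊆ eball x (m s) := by
    intro s hs t ht hst
    apply eball_mono x (hm0 t)
    exact min_le_min (gaussRad_antitoneOn hε hs ht hst) le_rfl
  have hmeas1 : AEMeasurable (fun t => volume (eball x (m t) ∩ P))
      (volume.restrict (Set.Ioi (0:ℝ))) := by
    apply aemeasurable_restrict_of_antitoneOn measurableSet_Ioi
    intro s hs t ht hst
    exact measure_mono (Set.inter_subset_inter_left _ (hanti s hs t ht hst))
  have hmeas2 : AEMeasurable (fun t => volume (eball x (m t)))
      (volume.restrict (Set.Ioi (0:ℝ))) := by
    apply aemeasurable_restrict_of_antitoneOn measurableSet_Ioi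
    intro s hs t ht hst
    exact measure_mono (hanti s hs t ht hst)
  have lcP := layercake_gauss hε x hPm
  have lcC := layercake_gauss hε x (meas_eball x δ₀).compl
  have lcU := layercake_total hε x
  constructor
  · rw [lcP, lcC]
    calc ∫⁻ t in Set.Ioi (0:ℝ), volume (P ∩ eball x (r t))
        ≤ ∫⁻ t in Set.Ioi (0:ℝ),
            (volume (eball x (m t) ∩ P) + volume ((eball x δ₀)ᶜ ∩ eball x (r t))) := by
          apply lintegral_mono
          intro t
          dsimp only
          rw [Set.inter_comm (eball x (m t)) P]
          exact hmeasineq P t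
      _ = (∫⁻ t in Set.Ioi (0:ℝ), volume (eball x (m t) ∩ P))
          + ∫⁻ t in Set.Ioi (0:ℝ), volume ((eball x δ₀)ᶜ ∩ eball x (r t)) :=
          lintegral_add_left' hmeas1 _
      _ ≤ ENNReal.ofReal (ω + κ)
          + ∫⁻ t in Set.Ioi (0:ℝ), volume ((eball x δ₀)ᶜ ∩ eball x (r t)) := by
          apply add_le_add_left
          calc ∫⁻ t in Set.Ioi (0:ℝ), volume (eball x (m t) ∩ P)
              ≤ ∫⁻ t in Set.Ioi (0:ℝ),
                  ENNReal.ofReal (ω + κ) * volume (eball x (m t)) :=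
                lintegral_mono fun t => (hratio t).1
            _ = ENNReal.ofReal (ω + κ) * ∫⁻ t in Set.Ioi (0:ℝ), volume (eball x (m t)) :=
                lintegral_const_mul' _ _ ENNReal.ofReal_ne_top
            _ ≤ ENNReal.ofReal (ω + κ) * ∫⁻ t in Set.Ioi (0:ℝ), volume (eball x (r t)) := by
                apply mul_le_mul_right
                exact lintegral_mono fun t => measure_mono (hsub t)
            _ = ENNReal.ofReal (ω + κ) := by rw [lcU, mul_one]
  · have h1 : (1 : ℝ≥0∞) ≤ (∫⁻ t in Set.Ioi (0:ℝ), volume (eball x (m t)))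
        + ∫⁻ y in (eball x δ₀)ᶜ, ENNReal.ofReal (gaussKer d ε (x - y)) := by
      rw [lcC, ← lcU]
      calc ∫⁻ t in Set.Ioi (0:ℝ), volume (eball x (r t))
          ≤ ∫⁻ t in Set.Ioi (0:ℝ),
              (volume (eball x (m t)) + volume ((eball x δ₀)ᶜ ∩ eball x (r t))) := by
            apply lintegral_mono
            intro t
            dsimp only
            have := hmeasineq Set.univ t
            simpa [Set.univ_inter] using this
        _ = _ := lintegral_add_left' hmeas2 _
    have h2 : (1 : ℝ≥0∞) - (∫⁻ y in (eball x δ₀)ᶜ, ENNReal.ofReal (gaussKer d ε (x - y)))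
        ≤ ∫⁻ t in Set.Ioi (0:ℝ), volume (eball x (m t)) := tsub_le_iff_right.mpr h1
    calc ENNReal.ofReal (ω - κ)
          * (1 - (∫⁻ y in (eball x δ₀)ᶜ, ENNReal.ofReal (gaussKer d ε (x - y))))
        ≤ ENNReal.ofReal (ω - κ) * ∫⁻ t in Set.Ioi (0:ℝ), volume (eball x (m t)) :=
          mul_le_mul_right h2 _
      _ = ∫⁻ t in Set.Ioi (0:ℝ), ENNReal.ofReal (ω - κ) * volume (eball x (m t)) :=
          (lintegral_const_mul' _ _ ENNReal.ofReal_ne_top).symm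
      _ ≤ ∫⁻ t in Set.Ioi (0:ℝ), volume (eball x (m t) ∩ P) :=
          lintegral_mono fun t => (hratio t).2
      _ ≤ ∫⁻ t in Set.Ioi (0:ℝ), volume (P ∩ eball x (r t)) := by
          apply lintegral_mono
          intro t
          dsimp only
          rw [Set.inter_comm (eball x (m t)) P]
          exact measure_mono (Set.inter_subset_inter_right _ (hsub t))
      _ = ∫⁻ y in P, ENNReal.ofReal (gaussKer d ε (x - y)) := lcP.symm


lemma setIntegral_gauss_tendsto {d : ℕ} {P : Set (Fin d → ℝ)} (hPm : MeasurableSet P)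
    {x : Fin d → ℝ} {ω : ℝ} (hω : saTendsto P x ω) :
    Filter.Tendsto (fun ε : ℝ => ∫ y in P, gaussKer d ε (x - y))
      (nhdsWithin 0 (Set.Ioi 0)) (nhds ω) := by
  have hω0 : 0 ≤ ω := by
    apply ge_of_tendsto' hω
    intro ε
    positivity
  rw [Metric.tendsto_nhds]
  intro η hη
  set κ := min 1 (η / (4 * (|ω| + 1))) with hκdef
  have hκ : 0 < κ := lt_min one_pos (by positivity)
  have hκ1 : κ ≤ 1 := min_le_left _ _
  have habs : (0:ℝ) < |ω| + 1 := by positivity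
  have hκη : (|ω| + 1) * κ ≤ η / 4 := by
    have h := min_le_right (1:ℝ) (η / (4 * (|ω| + 1)))
    rw [← hκdef] at h
    have h2 := mul_le_mul_of_nonneg_left h habs.le
    have heq : (|ω| + 1) * (η / (4 * (|ω| + 1))) = η / 4 := by
      field_simp
    linarith
  have hκη2 : κ ≤ η / 4 := by
    nlinarith [mul_nonneg (abs_nonneg ω) hκ.le]
  obtain ⟨δ, hδ0, hδ⟩ := Metric.tendsto_nhdsWithin_nhds.mp hω κ hκ
  set δ₀ := δ / 2 with hδ₀def
  have hδ₀ : 0 < δ₀ := by positivity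
  have hδ' : ∀ r : ℝ, 0 < r → r < δ →
      |(volume (eball x r ∩ P)).toReal / (volume (eball x r)).toReal - ω| < κ := by
    intro r hr hrδ
    have := hδ (Set.mem_Ioi.mpr hr) (by rwa [Real.dist_eq, sub_zero, abs_of_pos hr])
    rwa [Real.dist_eq] at this
  have htail : ∀ᶠ ε in nhdsWithin (0:ℝ) (Set.Ioi 0),
      (∫⁻ y in (eball x δ₀)ᶜ, ENNReal.ofReal (gaussKer d ε (x - y)))
        < ENNReal.ofReal κ := by
    apply (tail_tendsto x hδ₀).eventually_lt_const
    simpa [ENNReal.ofReal_pos] using hκ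
  filter_upwards [htail, self_mem_nhdsWithin] with ε hTε hεpos
  rw [Set.mem_Ioi] at hεpos
  obtain ⟨hU, hL⟩ := key_bounds hPm hω0 hκ hδ₀ (by rw [hδ₀def]; linarith) hδ' hεpos
  set T := ∫⁻ y in (eball x δ₀)ᶜ, ENNReal.ofReal (gaussKer d ε (x - y)) with hTdef
  set J := ∫⁻ y in P, ENNReal.ofReal (gaussKer d ε (x - y)) with hJdef
  have hInt : IntegrableOn (fun y => gaussKer d ε (x - y)) P volume :=
    (integrable_gaussKer_sub hεpos x).integrableOn
  have hIJ : ENNReal.ofReal (∫ y in P, gaussKer d ε (x - y)) = J :=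
    ofReal_integral_eq_lintegral_ofReal hInt
      (Filter.Eventually.of_forall fun y => gaussKer_nonneg hεpos _)
  have hI0 : 0 ≤ ∫ y in P, gaussKer d ε (x - y) :=
    setIntegral_nonneg hPm fun y _ => gaussKer_nonneg hεpos _
  have hIJ' : (∫ y in P, gaussKer d ε (x - y)) = J.toReal := by
    rw [← hIJ, ENNReal.toReal_ofReal hI0]
  have hJup : J ≤ ENNReal.ofReal (ω + 2 * κ) := by
    calc J ≤ ENNReal.ofReal (ω + κ) + T := hU
      _ ≤ ENNReal.ofReal (ω + κ) + ENNReal.ofReal κ := add_le_add_right hTε.le _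
      _ = ENNReal.ofReal (ω + 2 * κ) := by
          rw [← ENNReal.ofReal_add (by linarith) hκ.le]
          ring_nf
  have hJt : J ≠ ⊤ := (lt_of_le_of_lt hJup ENNReal.ofReal_lt_top).ne
  have hIup : (∫ y in P, gaussKer d ε (x - y)) ≤ ω + 2 * κ := by
    rw [hIJ']
    calc J.toReal ≤ (ENNReal.ofReal (ω + 2 * κ)).toReal :=
        ENNReal.toReal_mono ENNReal.ofReal_ne_top hJup
      _ ≤ ω + 2 * κ := le_of_eq (ENNReal.toReal_ofReal (by linarith))
  have hT1 : T ≤ 1 := by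
    calc T ≤ ENNReal.ofReal κ := hTε.le
      _ ≤ 1 := by
          rw [show (1:ℝ≥0∞) = ENNReal.ofReal 1 by simp]
          exact ENNReal.ofReal_le_ofReal hκ1
  have hlow1 : ENNReal.ofReal (ω - κ) ≤ J + ENNReal.ofReal (ω - κ) * T := by
    have h2 : (1 - T) + T = 1 := tsub_add_cancel_of_le hT1
    calc ENNReal.ofReal (ω - κ) = ENNReal.ofReal (ω - κ) * ((1 - T) + T) := by
          rw [h2, mul_one]
      _ = ENNReal.ofReal (ω - κ) * (1 - T) + ENNReal.ofReal (ω - κ) * T := mul_add _ _ _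
      _ ≤ J + ENNReal.ofReal (ω - κ) * T := add_le_add_left hL _
  have hlow2 : ENNReal.ofReal (ω - κ) * T ≤ ENNReal.ofReal ((|ω| + 1) * κ) := by
    calc ENNReal.ofReal (ω - κ) * T
        ≤ ENNReal.ofReal (|ω| + 1) * ENNReal.ofReal κ :=
          mul_le_mul' (ENNReal.ofReal_le_ofReal (by linarith [le_abs_self ω])) hTε.le
      _ = ENNReal.ofReal ((|ω| + 1) * κ) := (ENNReal.ofReal_mul (by positivity)).symm
  have hIlow : ω - κ - (|ω| + 1) * κ ≤ ∫ y in P, gaussKer d ε (x - y) := by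
    rcases le_or_gt (ω - κ) 0 with hneg | hpos
    · have : 0 ≤ (|ω| + 1) * κ := by positivity
      linarith
    · have h3 : ENNReal.ofReal (ω - κ) ≤ J + ENNReal.ofReal ((|ω| + 1) * κ) :=
        le_trans hlow1 (add_le_add_right hlow2 _)
      have hfin : J + ENNReal.ofReal ((|ω| + 1) * κ) ≠ ⊤ :=
        ENNReal.add_ne_top.mpr ⟨hJt, ENNReal.ofReal_ne_top⟩
      have h4 := ENNReal.toReal_mono hfin h3
      rw [ENNReal.toReal_add hJt ENNReal.ofReal_ne_top, ENNReal.toReal_ofReal hpos.le,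
        ENNReal.toReal_ofReal (by positivity : (0:ℝ) ≤ (|ω| + 1) * κ)] at h4
      rw [hIJ']
      linarith
  rw [Real.dist_eq, abs_lt]
  constructor
  · linarith
  · linarith

lemma eball_subset_metric {d : ℕ} (x : Fin d → ℝ) {δ : ℝ} (hδ : 0 < δ) :
    eball x δ ⊆ Metric.ball x δ := by
  intro y hy
  rw [Metric.mem_ball, dist_pi_lt_iff hδ]
  intro i
  rw [Real.dist_eq]
  by_contra hcon
  push_neg at hcon
  have h1 : δ ^ 2 ≤ (y i - x i) ^ 2 := by
    have := sq_le_sq' (by linarith [abs_nonneg (y i - x i), neg_abs_le (y i - x i)]) hcon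
    nlinarith [abs_nonneg (y i - x i), sq_abs (y i - x i)]
  have h2 : (y i - x i) ^ 2 ≤ ∑ j, (y j - x j) ^ 2 :=
    Finset.single_le_sum (f := fun j => (y j - x j) ^ 2) (fun j _ => by positivity)
      (Finset.mem_univ i)
  have h3 : ∑ j, (y j - x j) ^ 2 < δ ^ 2 := hy
  linarith

lemma tailR_tendsto {d : ℕ} (x : Fin d → ℝ) {δ : ℝ} (hδ : 0 < δ) :
    Filter.Tendsto (fun ε : ℝ => ∫ y in (eball x δ)ᶜ, gaussKer d ε (x - y))
      (nhdsWithin 0 (Set.Ioi 0)) (nhds 0) := by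
  have h1 := (ENNReal.tendsto_toReal (ENNReal.zero_ne_top)).comp (tail_tendsto x hδ)
  rw [ENNReal.toReal_zero] at h1
  apply h1.congr'
  filter_upwards [self_mem_nhdsWithin] with ε hε
  rw [Set.mem_Ioi] at hε
  have hint : IntegrableOn (fun y => gaussKer d ε (x - y)) (eball x δ)ᶜ volume :=
    (integrable_gaussKer_sub hε x).integrableOn
  have := ofReal_integral_eq_lintegral_ofReal hint
    (Filter.Eventually.of_forall fun y => gaussKer_nonneg hε _)
  rw [Function.comp_apply, ← this, ENNReal.toReal_ofReal]
  exact setIntegral_nonneg (meas_eball x δ).compl fun y _ => gaussKer_nonneg hε _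

lemma integral_gaussKer_sub_one {d : ℕ} {ε : ℝ} (hε : 0 < ε) (x : Fin d → ℝ) :
    ∫ y : Fin d → ℝ, gaussKer d ε (x - y) = 1 := by
  rw [integral_sub_left_eq_self (gaussKer d ε) volume x, integral_gaussKer hε]


/-- For a continuous function `f` on a full-dimensional polytope `P`, extended by zero,
`lim_{ε→0⁺}(f ∗ φ_{d,ε})(x) = f(x)·ω_P(x)`. -/
theorem convolution_limit_eq_solid_angle_weight (d : ℕ) (V : Finset (Fin d → ℝ))
    (P : Set (Fin d → ℝ)) (hP : P = convexHull ℝ (V : Set (Fin d → ℝ)))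
    (hfull : (interior P).Nonempty) (f : (Fin d → ℝ) → ℝ)
    (hf : ContinuousOn f P) (hf0 : ∀ y ∉ P, f y = 0)
    (x : Fin d → ℝ) (ω : ℝ) (hω : saTendsto P x ω) :
    Filter.Tendsto
      (fun ε : ℝ => ∫ y : Fin d → ℝ, f y * gaussKer d ε (x - y))
      (nhdsWithin 0 (Set.Ioi 0)) (nhds (f x * ω)) := by
  have hPc : IsCompact P := hP ▸ V.finite_toSet.isCompact_convexHull (𝕜 := ℝ)
  have hPcl : IsClosed P := hPc.isClosed
  have hPm : MeasurableSet P := hPcl.measurableSet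
  obtain ⟨M0, hM0⟩ := hPc.exists_bound_of_continuousOn hf
  set M := max M0 0 with hM
  have hMnn : 0 ≤ M := le_max_right _ _
  have hfb : ∀ y, |f y| ≤ M := by
    intro y
    by_cases hy : y ∈ P
    · exact le_trans (by simpa [Real.norm_eq_abs] using hM0 y hy) (le_max_left _ _)
    · rw [hf0 y hy]
      simpa using hMnn
  set ind := Set.indicator P (fun _ => (1:ℝ)) with hind
  set h := fun y => f y - f x * ind y with hh
  have hind01 : ∀ y, 0 ≤ ind y ∧ ind y ≤ 1 := by
    intro y; by_cases hy : y ∈ P <;> simp [hind, hy]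
  have hhb : ∀ y, |h y| ≤ 2 * M := by
    intro y
    calc |h y| ≤ |f y| + |f x * ind y| := abs_sub _ _
      _ ≤ M + M := by
          apply add_le_add (hfb y)
          rw [abs_mul]
          calc |f x| * |ind y| ≤ M * 1 :=
              mul_le_mul (hfb x)
                (by rw [abs_of_nonneg (hind01 y).1]; exact (hind01 y).2)
                (abs_nonneg _) hMnn
            _ = M := mul_one M
      _ = 2 * M := by ring
  have hfm : AEMeasurable f volume := by
    have hfi : f = Set.indicator P f := by
      funext y
      by_cases hy : y ∈ P
      · simp [hy]
      · simp [hy, hf0 y hy]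
    rw [hfi]
    exact (aemeasurable_indicator_iff hPm).mpr (hf.aemeasurable hPm)
  have hhm : AEMeasurable h volume := by
    have he : h = Set.indicator P (fun y => f y - f x) := by
      funext y
      by_cases hy : y ∈ P
      · simp [hh, hind, hy]
      · simp [hh, hind, hy, hf0 y hy]
    rw [he]
    exact (aemeasurable_indicator_iff hPm).mpr
      ((hf.sub continuousOn_const).aemeasurable hPm)
  have hsmall : ∀ η : ℝ, 0 < η → ∃ δ' : ℝ, 0 < δ' ∧ ∀ y ∈ eball x δ', |h y| ≤ η := by
    intro η hη
    by_cases hx : x ∈ P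
    · obtain ⟨δ', hδ'0, hδ'⟩ := Metric.continuousWithinAt_iff.mp (hf x hx) η hη
      refine ⟨δ', hδ'0, fun y hy => ?_⟩
      by_cases hyP : y ∈ P
      · have hd := eball_subset_metric x hδ'0 hy
        rw [Metric.mem_ball] at hd
        have hdd := hδ' hyP hd
        rw [Real.dist_eq] at hdd
        have hix : ind y = 1 := by simp [hind, hyP]
        rw [hh]
        dsimp only
        rw [hix, mul_one]
        exact hdd.le
      · have hiy : ind y = 0 := by simp [hind, hyP]
        rw [hh]
        dsimp only
        rw [hiy, mul_zero, hf0 y hyP, sub_zero, abs_zero]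
        exact hη.le
    · obtain ⟨δ', hδ'0, hδ'⟩ := Metric.isOpen_iff.mp hPcl.isOpen_compl x hx
      refine ⟨δ', hδ'0, fun y hy => ?_⟩
      have hyP : y ∉ P := hδ' (eball_subset_metric x hδ'0 hy)
      have hiy : ind y = 0 := by simp [hind, hyP]
      rw [hh]
      dsimp only
      rw [hiy, mul_zero, hf0 y hyP, sub_zero, abs_zero]
      exact hη.le
  have hS : Filter.Tendsto (fun ε : ℝ => f x * ∫ y in P, gaussKer d ε (x - y))
      (nhdsWithin 0 (Set.Ioi 0)) (nhds (f x * ω)) :=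
    (setIntegral_gauss_tendsto hPm hω).const_mul (f x)
  have hE : Filter.Tendsto (fun ε : ℝ => ∫ y, h y * gaussKer d ε (x - y))
      (nhdsWithin 0 (Set.Ioi 0)) (nhds 0) := by
    rw [Metric.tendsto_nhds]
    intro η hη
    obtain ⟨δ', hδ'0, hsm⟩ := hsmall (η/2) (by linarith)
    have htail2 : ∀ᶠ ε in nhdsWithin (0:ℝ) (Set.Ioi 0),
        |∫ y in (eball x δ')ᶜ, gaussKer d ε (x - y)| < η / (4 * (2*M+1)) := by
      have := Metric.tendsto_nhds.mp (tailR_tendsto x hδ'0) (η / (4*(2*M+1)))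
        (by positivity)
      simpa [Real.dist_eq] using this
    filter_upwards [htail2, self_mem_nhdsWithin] with ε hta hεp
    rw [Set.mem_Ioi] at hεp
    set g := fun y : Fin d → ℝ => gaussKer d ε (x - y) with hg
    have hgint : Integrable g := integrable_gaussKer_sub hεp x
    have hgnn : ∀ y, 0 ≤ g y := fun y => gaussKer_nonneg hεp _
    have hhg_int : Integrable (fun y => h y * g y) := by
      apply Integrable.mono' (hgint.const_mul (2*M))
        ((hhm.mul hgint.aemeasurable).aestronglyMeasurable)
      refine Filter.Eventually.of_forall fun y => ?_
      rw [Real.norm_eq_abs, Pi.mul_apply, abs_mul, abs_of_nonneg (hgnn y)]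
      exact mul_le_mul_of_nonneg_right (hhb y) (hgnn y)
    set T := ∫ y in (eball x δ')ᶜ, g y with hT
    have hTnn : 0 ≤ T := setIntegral_nonneg (meas_eball x δ').compl fun y _ => hgnn y
    have hbound : |∫ y, h y * g y| ≤ η/2 + 2*M*T := by
      calc |∫ y, h y * g y| ≤ ∫ y, |h y * g y| := by
            have hni := norm_integral_le_integral_norm (fun y => h y * g y) (μ := volume)
            simp only [Real.norm_eq_abs] at hni
            exact hni
        _ ≤ ∫ y, (η/2 * g y + (2*M) * Set.indicator (eball x δ')ᶜ g y) := by
            apply integral_mono hhg_int.abs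
            · exact (hgint.const_mul _).add
                ((hgint.indicator (meas_eball x δ').compl).const_mul _)
            · intro y
              dsimp only
              rw [abs_mul, abs_of_nonneg (hgnn y)]
              by_cases hy : y ∈ eball x δ'
              · have h1 : |h y| * g y ≤ η/2 * g y :=
                  mul_le_mul_of_nonneg_right (hsm y hy) (hgnn y)
                have h2 : 0 ≤ (2*M) * Set.indicator (eball x δ')ᶜ g y :=
                  mul_nonneg (by linarith) (Set.indicator_nonneg (fun z _ => hgnn z) _)
                linarith
              · have hind2 : Set.indicator (eball x δ')ᶜ g y = g y :=
                  Set.indicator_of_mem (Set.mem_compl hy) g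
                rw [hind2]
                have h1 : |h y| * g y ≤ 2*M * g y :=
                  mul_le_mul_of_nonneg_right (hhb y) (hgnn y)
                have h2 : 0 ≤ η/2 * g y := mul_nonneg (by linarith) (hgnn y)
                linarith
        _ = η/2 * (∫ y, g y) + 2*M*T := by
            rw [integral_add ((hgint.const_mul _))
              ((hgint.indicator (meas_eball x δ').compl).const_mul _),
              integral_const_mul, integral_const_mul,
              integral_indicator (meas_eball x δ').compl]
        _ = η/2 + 2*M*T := by
            rw [hg, integral_gaussKer_sub_one hεp x, mul_one]
    rw [Real.dist_eq, sub_zero]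
    have hta2 : T < η / (4 * (2*M+1)) := lt_of_abs_lt hta
    have h2MT : 2*M*T ≤ η/4 := by
      have hB : 2*M*(η/(4*(2*M+1))) ≤ η/4 := by
        rw [mul_div_assoc', div_le_div_iff₀ (by positivity) (by norm_num)]
        nlinarith
      exact le_trans (mul_le_mul_of_nonneg_left hta2.le (by linarith : (0:ℝ) ≤ 2*M)) hB
    calc |∫ y, h y * g y| ≤ η/2 + 2*M*T := hbound
      _ ≤ η/2 + η/4 := by linarith
      _ < η := by linarith
  have hsum := hE.add hS
  rw [zero_add] at hsum
  apply hsum.congr'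
  filter_upwards [self_mem_nhdsWithin] with ε hεp
  rw [Set.mem_Ioi] at hεp
  set g := fun y : Fin d → ℝ => gaussKer d ε (x - y) with hg
  have hgint : Integrable g := integrable_gaussKer_sub hεp x
  have hgnn : ∀ y, 0 ≤ g y := fun y => gaussKer_nonneg hεp _
  have hindg : ∀ y, ind y * g y = Set.indicator P g y := by
    intro y
    by_cases hy : y ∈ P <;> simp [hind, hy]
  have hfg_int : Integrable (fun y => f y * g y) := by
    apply Integrable.mono' (hgint.const_mul M)
      ((hfm.mul hgint.aemeasurable).aestronglyMeasurable)
    refine Filter.Eventually.of_forall fun y => ?_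
    rw [Real.norm_eq_abs, Pi.mul_apply, abs_mul, abs_of_nonneg (hgnn y)]
    exact mul_le_mul_of_nonneg_right (hfb y) (hgnn y)
  have hig_int : Integrable (fun y => f x * (ind y * g y)) := by
    have : (fun y => f x * (ind y * g y)) = fun y => f x * Set.indicator P g y := by
      funext y; rw [hindg y]
    rw [this]
    exact (hgint.indicator hPm).const_mul (f x)
  have he : (fun y => h y * g y) = fun y => f y * g y - f x * (ind y * g y) := by
    funext y
    rw [hh]
    ring
  have heq : ∫ y, h y * g y = (∫ y, f y * g y) - f x * ∫ y in P, g y := by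
    rw [he, integral_sub hfg_int hig_int]
    congr 1
    simp_rw [hindg]
    rw [integral_const_mul, integral_indicator hPm]
  linarith [heq]
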